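/- Assume the missingness is AMSAR. Then for every t ≥ 1, every m_t ∈ {0,1}, every x_t ∈ Σ, and every ō_{1:t-1} ∈ (Σ ∪ {∅})^{t-1} such that P({X_t = x_t} ∩ {X^obs_{1:t-1} = ō_{1:t-1}} ∩ {M_t = m_t}) > 0, it holds that P(X_t = x_t | {X^obs_{1:t-1} = ō_{1:t-1}} ∩ {M_t = m_t}) = P(X_t = x_t | X^obs_{1:t-1} = ō_{1:t-1}). -/

import Mathlib

open MeasureTheory ProbabilityTheory

variable {Ω : Type*} [MeasurableSpace Ω] {α : Type*}

/-- The event `{X^obs_{s:t} = ō_{s:t}}`: the underlying process agrees with the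
observation word `o` on all positions `i` with `s ≤ i ≤ t` at which `o` is not
missing (missing entries `o i = none` are wildcards). -/
def XobsEvent (X : ℕ → Ω → α) (o : ℕ → Option α) (s t : ℕ) : Set Ω :=
  {ω | ∀ i, s ≤ i → i ≤ t → ∀ a : α, o i = some a → X i ω = a}

/-- AMSAR (always missing sequentially at random): for every horizon `N`, time
`1 ≤ t ≤ N`, missingness value `m`, observation history `ō_{1:t-1}` (possibly
containing missing values) and future values `x̄_{t:N}` of the underlying
process, whenever the conditioning event has positive probability,
`P(M_t = m | X^obs_{1:t-1} = ō_{1:t-1}, X_{t:N} = x̄_{t:N})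
  = P(M_t = m | X^obs_{1:t-1} = ō_{1:t-1})`. -/
def AMSAR (μ : Measure Ω) (X : ℕ → Ω → α) (M : ℕ → Ω → Bool) : Prop :=
  ∀ (N t : ℕ) (m : Bool) (o : ℕ → Option α) (x : ℕ → α),
    1 ≤ t → t ≤ N →
    0 < μ (XobsEvent X o 1 (t - 1) ∩ {ω | ∀ i, t ≤ i → i ≤ N → X i ω = x i}) →
    ProbabilityTheory.cond μ
        (XobsEvent X o 1 (t - 1) ∩ {ω | ∀ i, t ≤ i → i ≤ N → X i ω = x i})
        {ω | M t ω = m}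
      = ProbabilityTheory.cond μ (XobsEvent X o 1 (t - 1)) {ω | M t ω = m}

theorem cond_eq_of_cond_eq_swap {μ : Measure Ω} [IsFiniteMeasure μ] {B C : Set Ω}
    (hB : MeasurableSet B) (hC : MeasurableSet C) (hBC : μ (B ∩ C) ≠ 0)
    (h : μ[C | B] = μ C) : μ[B | C] = μ B := by
  have hC0 : μ C ≠ 0 := (measure_pos_of_superset Set.inter_subset_right hBC).ne'
  rw [← ENNReal.mul_left_inj hC0 (measure_ne_top μ C), cond_mul_eq_inter hC, Set.inter_comm,
    ← cond_mul_eq_inter hB, h, mul_comm]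

theorem measurableSet_XobsEvent [MeasurableSpace α] [MeasurableSingletonClass α]
    {X : ℕ → Ω → α} (hX : ∀ i, Measurable (X i)) (o : ℕ → Option α) (s t : ℕ) :
    MeasurableSet (XobsEvent X o s t) := by
  have : XobsEvent X o s t =
      ⋂ i, ⋂ (_ : s ≤ i), ⋂ (_ : i ≤ t), {ω | ∀ a, o i = some a → X i ω = a} := by
    ext ω
    simp [XobsEvent]
  rw [this]
  refine .iInter fun i ↦ .iInter fun _ ↦ .iInter fun _ ↦ ?_
  cases o i with
  | none => simp
  | some a => simpa [Set.preimage, eq_comm] using hX i (measurableSet_singleton a)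

theorem setOf_forall_Icc_self_eq {β : Type*} (X : ℕ → β → α) (a : α) (t : ℕ) :
    {ω | ∀ i, t ≤ i → i ≤ t → X i ω = a} = {ω | X t ω = a} := by
  ext ω
  refine ⟨fun h ↦ h t le_rfl le_rfl, fun h i hti hit ↦ ?_⟩
  obtain rfl := le_antisymm hit hti
  exact h

theorem amsar_lemma_general
    [MeasurableSpace α] [MeasurableSingletonClass α]
    (μ : Measure Ω) [IsProbabilityMeasure μ]
    (X : ℕ → Ω → α) (M : ℕ → Ω → Bool)
    (hX : ∀ t, Measurable (X t)) (hM : ∀ t, Measurable (M t))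
    (hamsar : AMSAR μ X M)
    (t : ℕ) (ht : 1 ≤ t) (m : Bool) (x : α) (o : ℕ → Option α)
    (hpos : 0 < μ ({ω | X t ω = x} ∩ XobsEvent X o 1 (t - 1) ∩ {ω | M t ω = m})) :
    ProbabilityTheory.cond μ (XobsEvent X o 1 (t - 1) ∩ {ω | M t ω = m})
        {ω | X t ω = x}
      = ProbabilityTheory.cond μ (XobsEvent X o 1 (t - 1)) {ω | X t ω = x} := by
  set A := XobsEvent X o 1 (t - 1)
  set B : Set Ω := {ω | X t ω = x}
  set C : Set Ω := {ω | M t ω = m}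
  have hA : MeasurableSet A := measurableSet_XobsEvent hX o 1 (t - 1)
  have hB : MeasurableSet B := hX t (measurableSet_singleton x)
  have hC : MeasurableSet C := hM t (measurableSet_singleton m)
  have hABC : μ (A ∩ (B ∩ C)) ≠ 0 := by
    rw [← Set.inter_assoc, Set.inter_comm A B]
    exact hpos.ne'
  have hAB : 0 < μ (A ∩ B) :=
    measure_pos_of_superset (Set.inter_subset_inter_right A Set.inter_subset_left) hABC
  -- AMSAR with horizon `N = t`: under `μ[|A]`, the events `B` and `C` are independent.
  have hamsar_t : μ[|A][C | B] = μ[|A] C := by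
    have h := hamsar t t m o (fun _ ↦ x) ht le_rfl (by rwa [setOf_forall_Icc_self_eq])
    rw [setOf_forall_Icc_self_eq] at h
    rwa [cond_cond_eq_cond_inter hA hB]
  have hBC : μ[|A] (B ∩ C) ≠ 0 := (cond_pos_of_inter_ne_zero hA hABC).ne'
  rw [← cond_cond_eq_cond_inter hA hC]
  exact cond_eq_of_cond_eq_swap hB hC hBC hamsar_t

/-- Lemma 70 of Thon 2017. If the missingness is AMSAR, then
for every `t ≥ 1`, `m_t`, `x_t` and observation history `ō_{1:t-1}` with
`P(X_t = x_t, X^obs_{1:t-1} = ō_{1:t-1}, M_t = m_t) > 0`,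
`P(X_t = x_t | X^obs_{1:t-1} = ō_{1:t-1}, M_t = m_t)
  = P(X_t = x_t | X^obs_{1:t-1} = ō_{1:t-1})`. -/
theorem amsar_lemma
    [Fintype α] [Nonempty α] [MeasurableSpace α] [MeasurableSingletonClass α]
    (μ : Measure Ω) [IsProbabilityMeasure μ]
    (X : ℕ → Ω → α) (M : ℕ → Ω → Bool)
    (hX : ∀ t, Measurable (X t)) (hM : ∀ t, Measurable (M t))
    (hamsar : AMSAR μ X M)
    (t : ℕ) (ht : 1 ≤ t) (m : Bool) (x : α) (o : ℕ → Option α)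
    (hpos : 0 < μ ({ω | X t ω = x} ∩ XobsEvent X o 1 (t - 1) ∩ {ω | M t ω = m})) :
    ProbabilityTheory.cond μ (XobsEvent X o 1 (t - 1) ∩ {ω | M t ω = m})
        {ω | X t ω = x}
      = ProbabilityTheory.cond μ (XobsEvent X o 1 (t - 1)) {ω | X t ω = x} :=
  amsar_lemma_general μ X M hX hM hamsar t ht m x o hpos
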